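/- arXiv:1506.02331 — 4 statements merged into one kernel-verified Lean document; each statement's English description precedes it below -/
import Mathlib

section
/- Let G be a finite abelian group. The set of indicator functions {𝟙_K : K is a subgroup of G such that K^⊥ is a cyclic subgroup of Ĝ} is linearly independent in the complex vector space L²(G) of functions G → ℂ. -/
/-- For a subgroup `K` of a finite abelian group `G`, the subgroup
`K^⊥ = {χ ∈ Ĝ : χ k = 1 for all k ∈ K}` of the character group `Ĝ = Hom(G, ℂˣ)`. -/
def Kperp {G : Type*} [CommGroup G] (K : Subgroup G) : Subgroup (G →* ℂˣ) where
  carrier := {χ | ∀ k ∈ K, χ k = 1}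
  one_mem' := by intro k _; simp
  mul_mem' := by
    intro χ ψ hχ hψ k hk
    simp [hχ k hk, hψ k hk]
  inv_mem' := by
    intro χ hχ k hk
    simp [hχ k hk]

/-! Pairing with a character `χ` sends `𝟙_L` to `|L|` if `χ ∈ L^⊥` and to `0` otherwise. If `K^⊥`
is generated by `χ_K`, then `χ_K ∈ L^⊥ ↔ K^⊥ ≤ L^⊥ ↔ L ≤ K`, the last step because the characters of
`G ⧸ L` separate its points. So the matrix of pairings `⟨𝟙_L, χ_K⟩` is triangular for inclusion of
subgroups, with nonzero diagonal entries `|K|`. -/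

theorem linearIndependent_of_apply_eq_zero_of_not_le {ι R V : Type*} [PartialOrder ι]
    [WellFoundedLT ι] [Ring R] [NoZeroDivisors R] [AddCommGroup V] [Module R V] {v : ι → V}
    (f : ι → V →ₗ[R] R) (htriang : ∀ i j, ¬j ≤ i → f i (v j) = 0) (hdiag : ∀ i, f i (v i) ≠ 0) :
    LinearIndependent R v := by
  rw [linearIndependent_iff']
  intro s c hsum i
  induction i using WellFoundedLT.induction with
  | _ i IH =>
  intro hi
  have hfi : ∑ j ∈ s, c j * f i (v j) = 0 := by
    simpa only [map_sum, map_smul, smul_eq_mul, map_zero] using congrArg (f i) hsum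
  rw [Finset.sum_eq_single_of_mem i hi fun j hj hji => ?_] at hfi
  · exact (mul_eq_zero.mp hfi).resolve_right (hdiag i)
  · by_cases hji_le : j ≤ i
    · rw [IH j (hji_le.lt_of_ne hji) hj, zero_mul]
    · rw [htriang i j hji_le, mul_zero]

section Kperp

variable {G : Type*} [CommGroup G]

theorem Kperp_antitone : Antitone (Kperp (G := G)) :=
  fun _ _ h _ hχ k hk => hχ k (h hk)

theorem Kperp_le_Kperp_iff [Finite G] {K L : Subgroup G} : Kperp L ≤ Kperp K ↔ K ≤ L := by
  refine ⟨fun h g hg => ?_, fun h => Kperp_antitone h⟩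
  by_contra hgL
  have hg1 : (g : G ⧸ L) ≠ 1 := by rwa [Ne, QuotientGroup.eq_one_iff]
  obtain ⟨φ, hφ⟩ := CommGroup.exists_apply_ne_one_of_hasEnoughRootsOfUnity (G ⧸ L) ℂ hg1
  have hmem : φ.comp (QuotientGroup.mk' L) ∈ Kperp L := fun k hk => by
    simp [(QuotientGroup.eq_one_iff k).mpr hk]
  exact hφ (h hmem g hg)

theorem exists_mem_Kperp_iff_le [Finite G] {K : Subgroup G} (hK : IsCyclic (Kperp K)) :
    ∃ χ : G →* ℂˣ, ∀ L : Subgroup G, χ ∈ Kperp L ↔ L ≤ K := by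
  obtain ⟨χ, hχ⟩ := (Kperp K).isCyclic_iff_exists_zpowers_eq_top.mp hK
  exact ⟨χ, fun L => by rw [← Subgroup.zpowers_le, hχ, Kperp_le_Kperp_iff]⟩

open scoped Classical in
theorem sum_indicator_mul_char [Fintype G] (K : Subgroup G) (χ : G →* ℂˣ) :
    ∑ g, (if g ∈ K then (1 : ℂ) else 0) * χ g = if χ ∈ Kperp K then (Nat.card K : ℂ) else 0 := by
  have hsum : ∑ g, (if g ∈ K then (1 : ℂ) else 0) * χ g = ∑ k : K, (χ k : ℂ) := by
    simp only [ite_mul, one_mul, zero_mul]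
    rw [← Finset.sum_filter]
    exact Finset.sum_subtype _ (by simp) _
  rw [hsum]
  split_ifs with hχ
  · rw [Finset.sum_congr rfl fun (k : K) _ => congrArg Units.val (hχ k k.2), Units.val_one,
      Finset.sum_const, Finset.card_univ, nsmul_one, Nat.card_eq_fintype_card]
  · refine sum_hom_units_eq_zero ((Units.coeHom ℂ).comp (χ.comp K.subtype))
      fun h1 => hχ fun k hk => Units.ext ?_
    simpa only [MonoidHom.comp_apply, Units.coeHom_apply, Subgroup.coe_subtype,
      MonoidHom.one_apply, Units.val_one] using DFunLike.congr_fun h1 ⟨k, hk⟩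

end Kperp

open scoped Classical in
/-- Lemma 4 (`prop:01matrixinvertible`).  Let `G` be a finite abelian group.  The
indicator functions `𝟙_K`, over subgroups `K ≤ G` such that `K^⊥` is a cyclic subgroup
of `Ĝ`, are linearly independent in `L²(G)`. -/
theorem indicator_cyclic_perp_linearIndependent (G : Type*) [CommGroup G] [Fintype G] :
    LinearIndependent ℂ
      (fun K : {K : Subgroup G // IsCyclic ↥(Kperp K)} =>
        (fun g : G => if g ∈ (K : Subgroup G) then (1 : ℂ) else 0)) := by
  choose χ hχ using fun K : {K : Subgroup G // IsCyclic ↥(Kperp K)} => exists_mem_Kperp_iff_le K.2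
  have hpair : ∀ K L : {K : Subgroup G // IsCyclic ↥(Kperp K)},
      Fintype.linearCombination ℂ (fun g => (χ K g : ℂ))
        (fun g => if g ∈ (L : Subgroup G) then 1 else 0) =
      if L ≤ K then (Nat.card (L : Subgroup G) : ℂ) else 0 := fun K L => by
    simp only [Fintype.linearCombination_apply, smul_eq_mul, sum_indicator_mul_char, hχ K,
      Subtype.coe_le_coe]
  refine linearIndependent_of_apply_eq_zero_of_not_le
    (fun K => Fintype.linearCombination ℂ (fun g => (χ K g : ℂ)))
    (fun K L hLK => by rw [hpair, if_neg hLK]) (fun K => ?_)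
  rw [hpair, if_pos le_rfl]
  exact Nat.cast_ne_zero.mpr Nat.card_pos.ne'
end

section
/- Let q ∈ ℕ^m. Then there exists a linear ordering a^(1) < a^(2) < ⋯ < a^(N) of all tuples in ℕ^m dividing q (componentwise) such that: (1) for all i < j, a^(j) does not divide a^(i); and (2) for all i = 1,…,N, a^(i)·a^(N−i+1) = q (componentwise product). -/
/-!
Order the divisor tuples of `q` lexicographically. Componentwise divisibility implies
componentwise `≤`, hence lexicographic `≤`, which gives the antichain property (1). The
complement `b ↦ q / b` is an involution on the divisor tuples that reverses the lexicographic
order, because `d ↦ q i / d` is strictly decreasing on the divisors of `q i`; an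
order-reversing self-map of `{1, …, N}` is `i ↦ N - i + 1`, which gives (2).
-/

lemma Fin.eq_rev_of_strictAnti {n : ℕ} {f : Fin n → Fin n} (hf : StrictAnti f) : f = Fin.rev := by
  have h : Fin.rev ∘ f = id := (Fin.rev_strictAnti.comp hf).eq_id
  funext k
  simpa using congrArg Fin.rev (congrFun h k)

lemma Finset.orderIsoOfFin_rev {α : Type*} [LinearOrder α] (s : Finset α) {φ : α → α}
    (hmaps : Set.MapsTo φ s s) (hanti : StrictAntiOn φ s) (k : Fin s.card) :
    φ (s.orderIsoOfFin rfl k) = s.orderIsoOfFin rfl k.rev := by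
  set e := s.orderIsoOfFin rfl
  let g : Fin s.card → Fin s.card := fun k => e.symm ⟨φ (e k), hmaps (e k).2⟩
  have hg : StrictAnti g := fun k l hkl =>
    e.symm.strictMono (hanti (e k).2 (e l).2 (e.strictMono hkl))
  have hgk : e (g k) = e k.rev := by rw [Fin.eq_rev_of_strictAnti hg]
  simpa [g] using congrArg Subtype.val hgk

lemma Pi.toLex_div_lt_toLex_div {ι : Type*} [LT ι] {q b c : ι → ℕ} (hq : ∀ i, q i ≠ 0)
    (hb : ∀ i, b i ∣ q i) (hc : ∀ i, c i ∣ q i) (h : toLex b < toLex c) :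
    toLex (q / c) < toLex (q / b) := by
  obtain ⟨i, heq, hlt⟩ := h
  exact ⟨i, fun j hj => congrArg (q j / ·) (heq j hj).symm,
    (Nat.div_lt_div_left (hq i) (hc i) (hb i)).mpr hlt⟩

def divisorTuples {ι : Type*} [Fintype ι] [DecidableEq ι] (q : ι → ℕ) : Finset (ι → ℕ) :=
  Fintype.piFinset fun i => (q i).divisors

lemma mem_divisorTuples {ι : Type*} [Fintype ι] [DecidableEq ι] {q b : ι → ℕ}
    (hq : ∀ i, q i ≠ 0) : b ∈ divisorTuples q ↔ ∀ i, b i ∣ q i := by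
  simp [divisorTuples, hq]

/-- Proposition 10 (`prop:Ordering`).  For `q ∈ ℕ^m` (componentwise positive) there is a
linear ordering `a⁽¹⁾ < ⋯ < a⁽ᴺ⁾` of all tuples in `ℕ^m` dividing `q` componentwise such
that (1) `i < j` implies `a⁽ʲ⁾ ∤ a⁽ⁱ⁾`, and (2) `a⁽ⁱ⁾ · a⁽ᴺ⁻ⁱ⁺¹⁾ = q` for all `i`. -/
theorem divisor_tuple_ordering (m : ℕ) (q : Fin m → ℕ) (hq : ∀ i, 0 < q i) :
    ∃ (N : ℕ) (a : Fin N → (Fin m → ℕ)),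
      Function.Injective a ∧
      (∀ b : Fin m → ℕ, (∀ i, b i ∣ q i) ↔ ∃ k : Fin N, a k = b) ∧
      (∀ k l : Fin N, k < l → ¬ ∀ i, a l i ∣ a k i) ∧
      (∀ k : Fin N, ∀ i, a k i * a k.rev i = q i) := by
  have hq₀ : ∀ i, q i ≠ 0 := fun i => (hq i).ne'
  let S : Finset (Lex (Fin m → ℕ)) := (divisorTuples q).map toLex.toEmbedding
  have mem_S : ∀ b, toLex b ∈ S ↔ ∀ i, b i ∣ q i := by simp [S, mem_divisorTuples hq₀]
  let e := S.orderIsoOfFin rfl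
  have he : ∀ k, ∀ i, ofLex (e k : Lex (Fin m → ℕ)) i ∣ q i := fun k => (mem_S _).1 (e k).2
  refine ⟨S.card, fun k => ofLex (e k : Lex (Fin m → ℕ)), ?_, fun b => ⟨fun hb => ?_, ?_⟩, ?_, ?_⟩
  · exact fun k l hkl => e.injective (Subtype.ext (ofLex_inj.1 hkl))
  · exact ⟨e.symm ⟨toLex b, (mem_S b).2 hb⟩, by simp⟩
  · rintro ⟨k, rfl⟩
    exact he k
  · intro k l hkl hdvd
    have hle : e l ≤ e k := Pi.toLex_monotone fun i =>
      Nat.le_of_dvd (Nat.pos_of_dvd_of_pos (he k i) (hq i)) (hdvd i)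
    exact hle.not_gt (e.strictMono hkl)
  · intro k i
    have hcompl : ofLex (e k.rev : Lex (Fin m → ℕ)) = q / ofLex (e k : Lex (Fin m → ℕ)) :=
      (S.orderIsoOfFin_rev (φ := fun x => toLex (q / ofLex x))
        (fun x hx => (mem_S _).2 fun i => Nat.div_dvd_of_dvd ((mem_S x).1 hx i))
        (fun x hx y hy hxy =>
          Pi.toLex_div_lt_toLex_div hq₀ ((mem_S x).1 hx) ((mem_S y).1 hy) hxy) k).symm
    change ofLex (e k : Lex (Fin m → ℕ)) i * ofLex (e k.rev : Lex (Fin m → ℕ)) i = q i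
    rw [hcompl, Pi.div_apply]
    exact Nat.mul_div_cancel' (he k i)
end

section
/- Let χ be an odd character of R^× with associated tuples f_χ of conductors and q_χ = r/f_χ. If a, c ∈ ℕ^m divide q_χ (componentwise) but the componentwise product a·c does not divide q_χ, then v_{χ,a}(c) = 0, where v_{χ,a} := Σ_{d ∈ ℕ^m, d ∣ a} μ(d)·χ̄*(d)·w_{χ,a/d}, and v_{χ,a}(c) is evaluated at the image of c in R. -/
open scoped Classical in
/-- The first periodic Bernoulli function `B₁ : ℝ/ℤ → ℝ`, given by
`B₁(x + ℤ) = {x} - 1/2` for `x ∉ ℤ` and `B₁(x + ℤ) = 0` for `x ∈ ℤ`. -/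
noncomputable def B1 (x : AddCircle (1 : ℝ)) : ℝ :=
  if x = 0 then 0 else ((AddCircle.equivIco 1 0 x : ℝ) - 1 / 2)

/-- For `a ∈ R = ℤ/r₁ ⊕ ⋯ ⊕ ℤ/r_m`, the function `S_a : R → ℂ`,
`S_a(c) = B₁(a₁c₁/r₁ + ⋯ + a_m c_m/r_m + ℤ)`. -/
noncomputable def Sfun (m : ℕ) (r : Fin m → ℕ) [∀ i, NeZero (r i)]
    (a : ∀ i, ZMod (r i)) : (∀ i, ZMod (r i)) → ℂ :=
  fun c => (B1 ((((∑ i, ((a i).val * (c i).val : ℝ) / (r i : ℝ)) : ℝ) :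
    AddCircle (1 : ℝ))) : ℂ)

/-- For a character `χ = (χ₁, …, χ_m)` of `R^×` (a tuple of Dirichlet characters with
`χᵢ` of modulus `rᵢ`) and `a ∈ R`, the function `w_{χ,a} = Σ_{b ∈ R^×} χ(b) S_{ab}`. -/
noncomputable def wfun (m : ℕ) (r : Fin m → ℕ) [∀ i, NeZero (r i)]
    (χ : ∀ i, DirichletCharacter ℂ (r i)) (a : ∀ i, ZMod (r i)) :
    (∀ i, ZMod (r i)) → ℂ :=
  fun c => ∑ b : (∀ i, ZMod (r i))ˣ,
    (∏ i, χ i ((b : ∀ i, ZMod (r i)) i)) * Sfun m r (a * (b : ∀ i, ZMod (r i))) c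

/-- `w_{χ,a}` for a tuple `a ∈ ℕ^m`, via the canonical map `ℤ^m → R`. -/
noncomputable def wfunN (m : ℕ) (r : Fin m → ℕ) [∀ i, NeZero (r i)]
    (χ : ∀ i, DirichletCharacter ℂ (r i)) (a : Fin m → ℕ) :
    (∀ i, ZMod (r i)) → ℂ :=
  wfun m r χ (fun i => (a i : ZMod (r i)))

/-- The function `v_{χ,a} = Σ_{d ∣ a} μ(d) χ̄*(d) w_{χ,a/d}`, where the sum is over
tuples `d ∈ ℕ^m` dividing `a` componentwise, `μ(d) = μ(d₁)⋯μ(d_m)` and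
`χ̄*(d) = χ̄₁*(d₁)⋯χ̄_m*(d_m)` with `χᵢ*` the primitive character inducing `χᵢ`. -/
noncomputable def vfun (m : ℕ) (r : Fin m → ℕ) [∀ i, NeZero (r i)]
    (χ : ∀ i, DirichletCharacter ℂ (r i)) (a : Fin m → ℕ) :
    (∀ i, ZMod (r i)) → ℂ :=
  fun c => ∑ d ∈ Fintype.piFinset (fun i => (a i).divisors),
    (∏ i, (ArithmeticFunction.moebius (d i) : ℂ)) *
      (∏ i, (starRingEnd ℂ)
        ((χ i).primitiveCharacter ((d i : ZMod ((χ i).conductor))))) *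
      wfunN m r χ (fun i => a i / d i) c


/-!
Choose `i₀` and a prime `p` with `p ^ (κ + 1) ∣ a i₀ * c i₀`, where `κ = v_p(q_χ i₀)`; since
`c i₀ ∣ q_χ i₀`, also `p ∣ a i₀`. Multiplying or dividing the `i₀`-th coordinate of `d` by `p`
pairs off the terms of `v_{χ,a}(c)` with squarefree `d i₀`, and each pair cancels because
`μ(pd) = -μ(d)`, `χ̄*(pd) = χ̄*(p) χ̄*(d)` and `w_{χ,A}(c) = χ̄*(p) w_{χ,A/p}(c)` whenever
`p ^ (κ + 1) ∣ A i₀ * c i₀`.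

The last identity rests on two facts: `w_{χ,X}(c)` depends on `X` only through `X c`, and
`w_{χ,X}(c) = χ(u) w_{χ,Xu}(c)` for units `u`. If `s` is the additive order of `X i₀ * c i₀` in `ℤ/r i₀`, every unit
`u ≡ 1 (mod s)` fixes `X c`, so `w_{χ,X}(c) = 0` unless the conductor `f` of `χ i₀` divides `s`.
If `p ∣ f`, then `χ*(p) = 0` and the order of `A i₀ * c i₀` is too small for `f` to divide it.
If `p ∤ f`, then `p` is prime to the order `s` of `(A/p) i₀ * c i₀`, and a unit `u ≡ p (mod s)`
gives `w_{χ,A/p}(c) = χ(u) w_{χ,A}(c) = χ*(p) w_{χ,A}(c)` when `f ∣ s`, while both sides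
vanish when `f ∤ s`.
-/
open DirichletCharacter Finset Function

theorem Nat.exists_prime_pow_succ_factorization_dvd_of_not_dvd {n k : ℕ} (hk : k ≠ 0)
    (h : ¬ n ∣ k) : ∃ p, p.Prime ∧ p ^ (k.factorization p + 1) ∣ n := by
  rcases eq_or_ne n 0 with rfl | hn
  · exact ⟨2, Nat.prime_two, dvd_zero _⟩
  rw [← Nat.factorization_prime_le_iff_dvd hn hk] at h
  push Not at h
  obtain ⟨p, hp, hlt⟩ := h
  exact ⟨p, hp, (pow_dvd_pow p hlt).trans (Nat.ordProj_dvd n p)⟩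

theorem Nat.dvd_mul_div_gcd (N n : ℕ) : n ∣ N * (n / N.gcd n) := by
  conv_lhs => rw [← Nat.mul_div_cancel' (Nat.gcd_dvd_right N n)]
  exact mul_dvd_mul_right (Nat.gcd_dvd_left N n) _

theorem Nat.not_dvd_div_gcd_of_prime_dvd {n f N p : ℕ} (hn : n ≠ 0) (hfn : f ∣ n)
    (hp : p.Prime) (hpf : p ∣ f) (hN : p ^ ((n / f).factorization p + 1) ∣ N) :
    ¬ f ∣ n / N.gcd n := by
  obtain ⟨q, rfl⟩ := hfn
  have hf : 0 < f := Nat.pos_of_ne_zero (left_ne_zero_of_mul hn)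
  rw [Nat.mul_div_cancel_left q hf] at hN
  intro hdvd
  have hgq : N.gcd (f * q) ∣ q := by
    rw [← Nat.mul_dvd_mul_iff_left hf, mul_comm f]
    exact Nat.mul_dvd_of_dvd_div (Nat.gcd_dvd_right _ _) hdvd
  have hpq : p ^ (q.factorization p + 1) ∣ f * q := by
    rw [pow_succ']
    exact mul_dvd_mul hpf (Nat.ordProj_dvd q p)
  exact Nat.pow_succ_factorization_not_dvd (right_ne_zero_of_mul hn) hp
    ((Nat.dvd_gcd hN hpq).trans hgq)

theorem Nat.not_prime_dvd_div_gcd {n f N p : ℕ} (hn : n ≠ 0) (hfn : f ∣ n)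
    (hp : p.Prime) (hpf : ¬ p ∣ f) (hN : p ^ (n / f).factorization p ∣ N) :
    ¬ p ∣ n / N.gcd n := by
  obtain ⟨q, rfl⟩ := hfn
  rw [Nat.mul_div_cancel_left q (Nat.pos_of_ne_zero (left_ne_zero_of_mul hn))] at hN
  intro hdvd
  have hpg : p ^ q.factorization p ∣ N.gcd (f * q) :=
    Nat.dvd_gcd hN (dvd_mul_of_dvd_right (Nat.ordProj_dvd q p) f)
  have hpq : p ^ (q.factorization p + 1) ∣ f * q := by
    rw [pow_succ]
    exact (mul_dvd_mul_right hpg p).trans (Nat.mul_dvd_of_dvd_div (Nat.gcd_dvd_right _ _) hdvd)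
  have hcop : (p ^ (q.factorization p + 1)).Coprime f :=
    Nat.Coprime.pow_left _ ((Nat.Prime.coprime_iff_not_dvd hp).2 hpf)
  exact Nat.pow_succ_factorization_not_dvd (right_ne_zero_of_mul hn) hp
    (hcop.dvd_of_dvd_mul_left hpq)

theorem Nat.Prime.not_dvd_div_of_squarefree {p x : ℕ} (hp : p.Prime) (hx : Squarefree x)
    (hpx : p ∣ x) : ¬ p ∣ x / p := fun h =>
  hp.one_lt.ne' (Nat.isUnit_iff.1 (hx p (Nat.mul_dvd_of_dvd_div hpx h)))

theorem ZMod.mul_eq_mul_of_castHom_eq {n s : ℕ} (hs : s ∣ n) {z x y : ZMod n}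
    (hz : z * s = 0) (hxy : ZMod.castHom hs (ZMod s) x = ZMod.castHom hs (ZMod s) y) :
    z * x = z * y := by
  obtain ⟨x, rfl⟩ := ZMod.intCast_surjective x
  obtain ⟨y, rfl⟩ := ZMod.intCast_surjective y
  rw [map_intCast, map_intCast, ZMod.intCast_eq_intCast_iff_dvd_sub] at hxy
  obtain ⟨k, hk⟩ := hxy
  have : z * ((y - x : ℤ) : ZMod n) = 0 := by
    rw [hk]
    push_cast
    rw [← mul_assoc, hz, zero_mul]
  push_cast at this
  linear_combination -this

namespace DirichletCharacter

variable {R : Type*} [CommMonoidWithZero R] {n : ℕ} (χ : DirichletCharacter R n)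

theorem exists_unit_castHom_eq_one_ne_one [NeZero n] {s : ℕ} (hs : s ∣ n)
    (hfs : ¬ χ.conductor ∣ s) :
    ∃ u : (ZMod n)ˣ, ZMod.castHom hs (ZMod s) u = 1 ∧ χ u ≠ 1 := by
  have hχ : ¬ χ.FactorsThrough s := fun h => hfs (χ.conductor_dvd_of_mem_conductorSet h)
  rw [factorsThrough_iff_ker_unitsMap hs, SetLike.not_le_iff_exists] at hχ
  obtain ⟨u, hu, hχu⟩ := hχ
  refine ⟨u, ?_, fun h => hχu ?_⟩
  · rw [MonoidHom.mem_ker] at hu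
    simpa [ZMod.unitsMap_val] using congrArg Units.val hu
  · rw [MonoidHom.mem_ker]
    ext
    simpa using h

theorem apply_eq_primitiveCharacter_of_castHom_eq {s : ℕ} (hfs : χ.conductor ∣ s)
    (hs : s ∣ n) (u : (ZMod n)ˣ) {k : ℕ} (hu : ZMod.castHom hs (ZMod s) u = k) :
    χ u = χ.primitiveCharacter k := by
  conv_lhs => rw [← χ.changeLevel_primitiveCharacter]
  have hcast : ((u : ZMod n).cast : ZMod χ.conductor) = ZMod.castHom (hfs.trans hs) _ u := rfl
  rw [changeLevel_eq_cast_of_dvd, hcast, ← ZMod.castHom_comp hfs hs, RingHom.comp_apply, hu,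
    map_natCast]

theorem conj_apply_mul_apply_of_isUnit (ψ : DirichletCharacter ℂ n) {x : ZMod n}
    (hx : IsUnit x) : starRingEnd ℂ (ψ x) * ψ x = 1 := by
  rw [Complex.conj_mul', ← hx.unit_spec, unit_norm_eq_one]
  norm_num

end DirichletCharacter

theorem Fintype.prod_update_eq_mul {ι α M : Type*} [Fintype ι] [DecidableEq ι] [CommMonoid M]
    (g : ι → α → M) (d : ι → α) (i₀ : ι) {x : α} {k : M} (h : g i₀ x = k * g i₀ (d i₀)) :
    ∏ i, g i (update d i₀ x i) = k * ∏ i, g i (d i) := by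
  rw [Fintype.prod_eq_mul_prod_compl i₀, Fintype.prod_eq_mul_prod_compl i₀ (fun i => g i (d i)),
    update_self, h, mul_assoc]
  congr 2
  refine Finset.prod_congr rfl fun i hi => ?_
  rw [update_of_ne (by simpa using hi)]

section
variable {m : ℕ} {r : Fin m → ℕ} [∀ i, NeZero (r i)]

theorem Sfun_eq_B1_sum_toAddCircle (x c : ∀ i, ZMod (r i)) :
    Sfun m r x c = B1 (∑ i, ZMod.toAddCircle (x i * c i)) := by
  have h : ∀ i, ZMod.toAddCircle (x i * c i) =
      (((((x i).val * (c i).val : ℝ) / (r i : ℝ)) : ℝ) : AddCircle (1 : ℝ)) := by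
    intro i
    have hxc : x i * c i = (((x i).val * (c i).val : ℕ) : ZMod (r i)) := by simp
    rw [hxc, ZMod.toAddCircle_natCast]
    push_cast
    rfl
  simp only [Sfun, h, ← QuotientAddGroup.mk_sum]

theorem Sfun_congr {x y c : ∀ i, ZMod (r i)} (h : x * c = y * c) :
    Sfun m r x c = Sfun m r y c := by
  simp only [Sfun_eq_B1_sum_toAddCircle, ← Pi.mul_apply x c, ← Pi.mul_apply y c, h]

variable (χ : ∀ i, DirichletCharacter ℂ (r i))

theorem wfun_congr {X Y c : ∀ i, ZMod (r i)} (h : X * c = Y * c) :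
    wfun m r χ X c = wfun m r χ Y c :=
  Finset.sum_congr rfl fun b _ => by
    rw [Sfun_congr (show X * b * c = Y * b * c by rw [mul_right_comm, h, mul_right_comm])]

theorem wfun_eq_mul_wfun_mul_unit (X c : ∀ i, ZMod (r i)) (U : (∀ i, ZMod (r i))ˣ) :
    wfun m r χ X c = (∏ i, χ i ((U : ∀ i, ZMod (r i)) i)) * wfun m r χ (X * U) c := by
  rw [wfun, wfun, Finset.mul_sum, ← Equiv.sum_comp (Equiv.mulLeft U)]
  refine Finset.sum_congr rfl fun b _ => ?_
  simp only [Equiv.coe_mulLeft, Units.val_mul, Pi.mul_apply, map_mul, prod_mul_distrib]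
  rw [mul_assoc, ← mul_assoc X]

theorem wfun_eq_mul_wfun_of_mul_unit (i₀ : Fin m) (u : (ZMod (r i₀))ˣ) {X X' c : ∀ i, ZMod (r i)}
    (hne : ∀ i ≠ i₀, X' i * c i = X i * c i) (h₀ : X' i₀ * c i₀ * u = X i₀ * c i₀) :
    wfun m r χ X' c = χ i₀ u * wfun m r χ X c := by
  let U : (∀ i, ZMod (r i))ˣ := Units.map (MonoidHom.mulSingle (fun i => ZMod (r i)) i₀) u
  have hU : (U : ∀ i, ZMod (r i)) = Pi.mulSingle i₀ (u : ZMod (r i₀)) := rfl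
  have hχU : ∏ i, χ i ((U : ∀ i, ZMod (r i)) i) = χ i₀ u := by
    rw [hU, ← Fintype.prod_pi_mulSingle' i₀ (χ i₀ u)]
    exact Finset.prod_congr rfl fun i _ => Pi.apply_mulSingle (fun i => χ i) (fun i => map_one _)
      i₀ _ i
  rw [wfun_eq_mul_wfun_mul_unit χ X' c U, hχU]
  congr 1
  refine wfun_congr χ (funext fun i => ?_)
  rcases eq_or_ne i i₀ with rfl | hi
  · rw [Pi.mul_apply, Pi.mul_apply, Pi.mul_apply, hU, Pi.mulSingle_eq_same, mul_right_comm, h₀]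
  · simp only [Pi.mul_apply, hU, Pi.mulSingle_eq_of_ne hi, mul_one, hne i hi]

theorem wfun_eq_zero_of_not_conductor_dvd {i₀ : Fin m} {s : ℕ} (hs : s ∣ r i₀)
    (hfs : ¬ (χ i₀).conductor ∣ s) {X c : ∀ i, ZMod (r i)} (hz : X i₀ * c i₀ * s = 0) :
    wfun m r χ X c = 0 := by
  obtain ⟨u, hu, hχu⟩ := (χ i₀).exists_unit_castHom_eq_one_ne_one hs hfs
  have hfix : X i₀ * c i₀ * u = X i₀ * c i₀ := by
    rw [ZMod.mul_eq_mul_of_castHom_eq hs hz (hu.trans (map_one _).symm), mul_one]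
  have h := wfun_eq_mul_wfun_of_mul_unit χ i₀ u (fun _ _ => rfl) hfix
  by_contra hw
  exact hχu ((mul_eq_right₀ hw).1 h.symm)

theorem wfun_eq_primitiveCharacter_mul_wfun {i₀ : Fin m} {p s : ℕ} (hs : s ∣ r i₀)
    (hfs : (χ i₀).conductor ∣ s) (hps : p.Coprime s) {X X' c : ∀ i, ZMod (r i)}
    (hX : X i₀ = p * X' i₀) (hX' : ∀ i ≠ i₀, X i = X' i) (hz : X' i₀ * c i₀ * s = 0) :
    wfun m r χ X' c = (χ i₀).primitiveCharacter p * wfun m r χ X c := by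
  obtain ⟨u, hu⟩ := ZMod.unitsMap_surjective hs (ZMod.unitOfCoprime p hps)
  have hup : ZMod.castHom hs (ZMod s) u = p := by
    rw [ZMod.castHom_apply, ← ZMod.unitsMap_val hs, hu, ZMod.coe_unitOfCoprime]
  rw [← (χ i₀).apply_eq_primitiveCharacter_of_castHom_eq hfs hs u hup]
  refine wfun_eq_mul_wfun_of_mul_unit χ i₀ u (fun i hi => by rw [hX' i hi]) ?_
  rw [ZMod.mul_eq_mul_of_castHom_eq hs hz (hup.trans (map_natCast _ p).symm), hX]
  ring

theorem wfunN_eq_conj_primitiveCharacter_mul_wfunN {i₀ : Fin m} {p : ℕ} (hp : p.Prime)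
    {A A' C : Fin m → ℕ} (hA : A i₀ = p * A' i₀) (hA' : ∀ i ≠ i₀, A i = A' i)
    (hN : p ^ ((r i₀ / (χ i₀).conductor).factorization p + 1) ∣ A i₀ * C i₀) :
    wfunN m r χ A (fun i => C i) =
      starRingEnd ℂ ((χ i₀).primitiveCharacter p) * wfunN m r χ A' (fun i => C i) := by
  have hr : r i₀ ≠ 0 := NeZero.ne _
  have hfr : (χ i₀).conductor ∣ r i₀ := conductor_dvd_level _
  have hX : (A i₀ : ZMod (r i₀)) = p * A' i₀ := by rw [hA, Nat.cast_mul]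
  have hX' : ∀ i ≠ i₀, (A i : ZMod (r i)) = A' i := fun i hi => by rw [hA' i hi]
  have horder : ∀ N : ℕ, (N : ZMod (r i₀)) * ((r i₀ / N.gcd (r i₀) : ℕ) : ZMod (r i₀)) = 0 :=
    fun N => by rw [← Nat.cast_mul, ZMod.natCast_eq_zero_iff]; exact Nat.dvd_mul_div_gcd N _
  have hdiv : ∀ N : ℕ, r i₀ / N.gcd (r i₀) ∣ r i₀ :=
    fun N => Nat.div_dvd_of_dvd (Nat.gcd_dvd_right _ _)
  by_cases hpf : p ∣ (χ i₀).conductor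
  · have hχp : (χ i₀).primitiveCharacter p = 0 :=
      MulChar.map_nonunit _ (by rwa [ZMod.isUnit_prime_iff_not_dvd hp, not_not])
    rw [hχp, map_zero, zero_mul]
    refine wfun_eq_zero_of_not_conductor_dvd χ (hdiv _)
      (Nat.not_dvd_div_gcd_of_prime_dvd hr hfr hp hpf hN) ?_
    exact_mod_cast horder (A i₀ * C i₀)
  set s := r i₀ / (A' i₀ * C i₀).gcd (r i₀)
  have hz' : (A' i₀ : ZMod (r i₀)) * C i₀ * s = 0 := by exact_mod_cast horder (A' i₀ * C i₀)
  by_cases hfs : (χ i₀).conductor ∣ s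
  · have hN' : p ^ (r i₀ / (χ i₀).conductor).factorization p ∣ A' i₀ * C i₀ := by
      rw [hA, pow_succ', mul_assoc] at hN
      exact Nat.dvd_of_mul_dvd_mul_left hp.pos hN
    have hps : p.Coprime s :=
      (Nat.Prime.coprime_iff_not_dvd hp).2 (Nat.not_prime_dvd_div_gcd hr hfr hp hpf hN')
    rw [wfunN, wfunN, wfun_eq_primitiveCharacter_mul_wfun χ (hdiv _) hfs hps hX hX' hz',
      ← mul_assoc, conj_apply_mul_apply_of_isUnit _ ((ZMod.isUnit_prime_iff_not_dvd hp).2 hpf),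
      one_mul]
  · have hz : (A i₀ : ZMod (r i₀)) * C i₀ * s = 0 := by
      rw [hX, mul_assoc, mul_assoc, ← mul_assoc (A' i₀ : ZMod (r i₀)), hz', mul_zero]
    rw [wfunN, wfunN, wfun_eq_zero_of_not_conductor_dvd χ (hdiv _) hfs hz,
      wfun_eq_zero_of_not_conductor_dvd χ (hdiv _) hfs hz', mul_zero]

noncomputable def vfunTerm (a d : Fin m → ℕ) (c : ∀ i, ZMod (r i)) : ℂ :=
  (∏ i, (ArithmeticFunction.moebius (d i) : ℂ)) *
    (∏ i, starRingEnd ℂ ((χ i).primitiveCharacter ((d i : ZMod ((χ i).conductor))))) *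
    wfunN m r χ (fun i => a i / d i) c

theorem vfun_eq_sum_vfunTerm (a : Fin m → ℕ) (c : ∀ i, ZMod (r i)) :
    vfun m r χ a c = ∑ d ∈ Fintype.piFinset (fun i => (a i).divisors), vfunTerm χ a d c :=
  rfl

theorem vfunTerm_eq_zero_of_not_squarefree {a d : Fin m → ℕ} {i₀ : Fin m}
    (hd : ¬ Squarefree (d i₀)) (c : ∀ i, ZMod (r i)) : vfunTerm χ a d c = 0 := by
  rw [vfunTerm, Finset.prod_eq_zero (Finset.mem_univ i₀)
    (by rw [ArithmeticFunction.moebius_eq_zero_of_not_squarefree hd, Int.cast_zero]),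
    zero_mul, zero_mul]

theorem vfunTerm_add_vfunTerm_update_mul_eq_zero {a c d : Fin m → ℕ} {i₀ : Fin m} {p : ℕ}
    (hp : p.Prime) (hpd : ¬ p ∣ d i₀) (hpda : p * d i₀ ∣ a i₀)
    (hN : p ^ ((r i₀ / (χ i₀).conductor).factorization p + 1) ∣ a i₀ * c i₀) :
    vfunTerm χ a d (fun i => c i) + vfunTerm χ a (update d i₀ (p * d i₀)) (fun i => c i) = 0 := by
  have hcop : p.Coprime (d i₀) := (Nat.Prime.coprime_iff_not_dvd hp).2 hpd
  have hda : d i₀ ∣ a i₀ := dvd_of_mul_left_dvd hpda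
  have hμ : ∏ i, (ArithmeticFunction.moebius (update d i₀ (p * d i₀) i) : ℂ) =
      -1 * ∏ i, (ArithmeticFunction.moebius (d i) : ℂ) := by
    refine Fintype.prod_update_eq_mul (fun _ n => (ArithmeticFunction.moebius n : ℂ)) d i₀ ?_
    rw [ArithmeticFunction.isMultiplicative_moebius.map_mul_of_coprime hcop,
      ArithmeticFunction.moebius_apply_prime hp]
    push_cast
    ring
  have hχ : ∏ i, starRingEnd ℂ ((χ i).primitiveCharacter
        ((update d i₀ (p * d i₀) i : ℕ) : ZMod ((χ i).conductor))) =
      starRingEnd ℂ ((χ i₀).primitiveCharacter p) *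
        ∏ i, starRingEnd ℂ ((χ i).primitiveCharacter ((d i : ZMod ((χ i).conductor)))) :=
    Fintype.prod_update_eq_mul
      (fun i n => starRingEnd ℂ ((χ i).primitiveCharacter ((n : ZMod ((χ i).conductor))))) d i₀
      (by rw [Nat.cast_mul, map_mul, map_mul])
  have hA : a i₀ / d i₀ = p * (a i₀ / update d i₀ (p * d i₀) i₀) := by
    rw [update_self, Nat.mul_comm p (d i₀), ← Nat.div_div_eq_div_mul,
      Nat.mul_div_cancel' (Nat.dvd_div_of_mul_dvd (Nat.mul_comm p (d i₀) ▸ hpda))]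
  have hA' : ∀ i ≠ i₀, a i / d i = a i / update d i₀ (p * d i₀) i :=
    fun i hi => by rw [update_of_ne hi]
  have hN' : p ^ ((r i₀ / (χ i₀).conductor).factorization p + 1) ∣ a i₀ / d i₀ * c i₀ := by
    rw [← Nat.mul_div_cancel' hda, mul_assoc] at hN
    exact (Nat.Coprime.pow_left _ hcop).dvd_of_dvd_mul_left hN
  rw [vfunTerm, vfunTerm, hμ, hχ, wfunN_eq_conj_primitiveCharacter_mul_wfunN χ hp hA hA' hN']
  ring

theorem vfunTerm_add_vfunTerm_update_eq_zero {a c d : Fin m → ℕ} {i₀ : Fin m} {p : ℕ}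
    (hp : p.Prime) (hpa : p ∣ a i₀) (hda : d i₀ ∣ a i₀) (hd : Squarefree (d i₀))
    (hN : p ^ ((r i₀ / (χ i₀).conductor).factorization p + 1) ∣ a i₀ * c i₀) :
    vfunTerm χ a d (fun i => c i) +
      vfunTerm χ a (update d i₀ (if p ∣ d i₀ then d i₀ / p else p * d i₀)) (fun i => c i) = 0 := by
  by_cases hpd : p ∣ d i₀
  · rw [if_pos hpd]
    have hpd' : p * (d i₀ / p) = d i₀ := Nat.mul_div_cancel' hpd
    have h := vfunTerm_add_vfunTerm_update_mul_eq_zero χ (d := update d i₀ (d i₀ / p)) hp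
      (by rw [update_self]; exact hp.not_dvd_div_of_squarefree hd hpd)
      (by rw [update_self, hpd']; exact hda) hN
    rwa [update_self, hpd', update_idem, update_eq_self, add_comm] at h
  · rw [if_neg hpd]
    exact vfunTerm_add_vfunTerm_update_mul_eq_zero χ hp hpd
      (((Nat.Prime.coprime_iff_not_dvd hp).2 hpd).mul_dvd_of_dvd_of_dvd hpa hda) hN

theorem vfun_eq_zero_of_prime_dvd {a c : Fin m → ℕ} {i₀ : Fin m} {p : ℕ} (hp : p.Prime)
    (hpa : p ∣ a i₀)
    (hN : p ^ ((r i₀ / (χ i₀).conductor).factorization p + 1) ∣ a i₀ * c i₀) :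
    vfun m r χ a (fun i => c i) = 0 := by
  set D := Fintype.piFinset (fun i => (a i).divisors)
  have hsq : ∑ d ∈ D with Squarefree (d i₀), vfunTerm χ a d (fun i => c i) =
      ∑ d ∈ D, vfunTerm χ a d (fun i => c i) :=
    Finset.sum_filter_of_ne fun d _ h => by_contra fun hd =>
      h (vfunTerm_eq_zero_of_not_squarefree χ hd _)
  rw [vfun_eq_sum_vfunTerm, ← hsq]
  let t : ℕ → ℕ := fun x => if p ∣ x then x / p else p * x
  have ht : ∀ x, x ∣ a i₀ → a i₀ ≠ 0 → Squarefree x →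
      (t x ∣ a i₀ ∧ Squarefree (t x)) ∧ t (t x) = x ∧ t x ≠ x := by
    intro x hxa ha hx
    have hx0 : x ≠ 0 := ne_zero_of_dvd_ne_zero ha hxa
    by_cases hpx : p ∣ x
    · simp only [t, if_pos hpx, if_neg (hp.not_dvd_div_of_squarefree hx hpx),
        Nat.mul_div_cancel' hpx]
      exact ⟨⟨(Nat.div_dvd_of_dvd hpx).trans hxa, hx.squarefree_of_dvd (Nat.div_dvd_of_dvd hpx)⟩,
        trivial, (Nat.div_lt_self (Nat.pos_of_ne_zero hx0) hp.one_lt).ne⟩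
    · simp only [t, if_neg hpx, if_pos (dvd_mul_right p x), Nat.mul_div_cancel_left x hp.pos]
      have hcop := (Nat.Prime.coprime_iff_not_dvd hp).2 hpx
      exact ⟨⟨hcop.mul_dvd_of_dvd_of_dvd hpa hxa, (Nat.squarefree_mul hcop).2 ⟨hp.squarefree, hx⟩⟩,
        trivial, fun h => hp.one_lt.ne' (Nat.eq_of_mul_eq_mul_right (Nat.pos_of_ne_zero hx0)
          (h.trans (one_mul x).symm))⟩
  have hmem : ∀ d, d ∈ {d ∈ D | Squarefree (d i₀)} ↔
      (∀ i, d i ∣ a i ∧ a i ≠ 0) ∧ Squarefree (d i₀) := by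
    simp [D, Fintype.mem_piFinset, Nat.mem_divisors]
  refine Finset.sum_involution (fun d _ => update d i₀ (t (d i₀))) (fun d hd => ?_)
    (fun d hd _ h => ?_) (fun d hd => ?_) (fun d hd => ?_) <;> rw [hmem] at hd
  · exact vfunTerm_add_vfunTerm_update_eq_zero χ hp hpa (hd.1 i₀).1 hd.2 hN
  · exact (ht _ (hd.1 i₀).1 (hd.1 i₀).2 hd.2).2.2 (by simpa using congrFun h i₀)
  · obtain ⟨hta, -, -⟩ := ht _ (hd.1 i₀).1 (hd.1 i₀).2 hd.2
    refine (hmem _).2 ⟨fun i => ?_, by simpa using hta.2⟩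
    rcases eq_or_ne i i₀ with rfl | hi
    · simpa using ⟨hta.1, (hd.1 i).2⟩
    · simpa [update_of_ne hi] using hd.1 i
  · simp [(ht _ (hd.1 i₀).1 (hd.1 i₀).2 hd.2).2.1]

end

theorem v_chi_a_c_eq_zero_general (m : ℕ) (r : Fin m → ℕ) [∀ i, NeZero (r i)]
    (χ : ∀ i, DirichletCharacter ℂ (r i))
    (a c : Fin m → ℕ)
    (hc : ∀ i, c i ∣ r i / (χ i).conductor)
    (hac : ¬ ∀ i, a i * c i ∣ r i / (χ i).conductor) :
    vfun m r χ a (fun i => (c i : ZMod (r i))) = 0 := by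
  push Not at hac
  obtain ⟨i₀, hi₀⟩ := hac
  have hq : r i₀ / (χ i₀).conductor ≠ 0 :=
    (Nat.div_ne_zero_iff_of_dvd (conductor_dvd_level _)).2 ⟨NeZero.ne _, conductor_ne_zero _⟩
  obtain ⟨p, hp, hN⟩ := Nat.exists_prime_pow_succ_factorization_dvd_of_not_dvd hq hi₀
  have hpa : p ∣ a i₀ := by
    by_contra hpa
    have hcop := Nat.Coprime.pow_left
      ((r i₀ / (χ i₀).conductor).factorization p + 1) ((Nat.Prime.coprime_iff_not_dvd hp).2 hpa)
    exact Nat.pow_succ_factorization_not_dvd hq hp ((hcop.dvd_of_dvd_mul_left hN).trans (hc i₀))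
  exact vfun_eq_zero_of_prime_dvd χ hp hpa hN

/-- Proposition 11 (`prop:v_chi_a_c_equals_0`).  Let `χ` be an odd character of `R^×`
with conductor tuple `f_χ` and `q_χ = r / f_χ`.  If `a, c ∈ ℕ^m` divide `q_χ`
componentwise but `a·c ∤ q_χ`, then `v_{χ,a}(c) = 0`. -/
theorem v_chi_a_c_eq_zero (m : ℕ) (hm : 0 < m) (r : Fin m → ℕ) [∀ i, NeZero (r i)]
    (χ : ∀ i, DirichletCharacter ℂ (r i)) (hodd : (∏ i, χ i (-1)) = -1)
    (a c : Fin m → ℕ)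
    (ha : ∀ i, a i ∣ r i / (χ i).conductor)
    (hc : ∀ i, c i ∣ r i / (χ i).conductor)
    (hac : ¬ ∀ i, a i * c i ∣ r i / (χ i).conductor) :
    vfun m r χ a (fun i => (c i : ZMod (r i))) = 0 :=
  v_chi_a_c_eq_zero_general m r χ a c hc hac
end

section
/- For any u = (u₁,…,uₙ) ∈ ℝⁿ and any λ ∈ Λ ∩ [0,1)ⁿ, the identity Σ_{i=1}^n uᵢλᵢ = (1/2)( |H|·⟨h_u, S_λ⟩ + Σ_{i : λᵢ ≠ 0} uᵢ ) holds, where h_u ∈ L²(H) is defined by h_u(φ) = (Σ_{i : π_i = φ} uᵢ) − (Σ_{i : π_i = −φ} uᵢ) and S_λ ∈ L²(H) by S_λ(φ) = B₁(φ(λ + ℤⁿ)). -/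
/-- The `i`-th coordinate projection `Λ → ℝ/ℤ`, `x ↦ x i + ℤ`.  Homomorphisms
`Λ/ℤⁿ → ℝ/ℤ` are identified with homomorphisms `Λ → ℝ/ℤ` vanishing on integer
vectors. -/
noncomputable def coordHom (n : ℕ) (Λ : AddSubgroup (Fin n → ℝ)) (i : Fin n) :
    ↥Λ →+ AddCircle (1 : ℝ) :=
  (QuotientAddGroup.mk' (AddSubgroup.zmultiples (1 : ℝ))).comp
    ((Pi.evalAddMonoidHom (fun _ : Fin n => ℝ) i).comp Λ.subtype)

/-!
Since `h_u` is a signed sum of point masses at the coordinate characters `±πᵢ`, the pairing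
`|H| ⟨h_u, S_λ⟩` collapses to `Σᵢ uᵢ (B₁(λᵢ) - B₁(-λᵢ)) = 2 Σᵢ uᵢ B₁(λᵢ)`, because `B₁` is odd; and
for `λᵢ ∈ [0,1)` one has `2 B₁(λᵢ) + [λᵢ ≠ 0] = 2 λᵢ`.

The only non-formal input is that `H` is finite, so that `|H| · |H|⁻¹ = 1`: `H` is the dual of
`Λ/ℤⁿ`, which is finite because `Λ ∩ [0,1)ⁿ` is a set of representatives, and a homomorphism
from a group of order `N` to `ℝ/ℤ` takes values in the finite `N`-torsion of `ℝ/ℤ`.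
-/

open Finset

instance AddCircle.finite_addMonoidHom {G 𝕜 : Type*} [AddGroup G] [Finite G] [AddCommGroup 𝕜]
    [LinearOrder 𝕜] [IsOrderedAddMonoid 𝕜] {p : 𝕜} : Finite (G →+ AddCircle p) := by
  have := (AddCircle.finite_torsion p (Nat.card_pos (α := G))).to_subtype
  refine .of_injective (fun f : G →+ AddCircle p => fun g : G =>
    (⟨f g, by rw [Set.mem_ofPred_eq, ← map_nsmul, card_nsmul_eq_zero', map_zero]⟩ :
      {u : AddCircle p | Nat.card G • u = 0})) fun f f' h => ?_
  ext g
  exact congrArg Subtype.val (congrFun h g)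

open scoped Classical in
theorem finsum_sum_ite_eq_mul {ι M R : Type*} [Fintype ι] [CommSemiring R] {P : M → Prop}
    [hP : Finite {m // P m}] (w : ι → M) (hw : ∀ i, P (w i)) (u : ι → R) (f : {m // P m} → R) :
    ∑ᶠ φ : {m // P m}, (∑ i, if w i = φ.1 then u i else 0) * f φ = ∑ i, u i * f ⟨w i, hw i⟩ := by
  cases nonempty_fintype {m // P m}
  simp only [finsum_eq_sum_of_fintype, sum_mul, ite_mul, zero_mul]
  rw [sum_comm]
  refine sum_congr rfl fun i _ => ?_
  rw [Fintype.sum_eq_single ⟨w i, hw i⟩ fun φ hφ => if_neg fun h => hφ (Subtype.ext h.symm)]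
  exact if_pos rfl

lemma B1_coe_of_mem_Ico {x : ℝ} (hx : x ∈ Set.Ico (0 : ℝ) 1) :
    B1 x = if x = 0 then 0 else x - 1 / 2 := by
  rcases eq_or_ne x 0 with rfl | hx0
  · simp [B1]
  · have hne : (x : AddCircle (1 : ℝ)) ≠ 0 := by
      rwa [Ne, AddCircle.coe_eq_zero_iff_of_mem_Ico hx]
    rw [B1, if_neg hne, if_neg hx0, AddCircle.equivIco_coe_eq (by simpa using hx)]

lemma B1_neg (y : AddCircle (1 : ℝ)) : B1 (-y) = -B1 y := by
  obtain ⟨t, ht, rfl⟩ : ∃ t ∈ Set.Ico (0 : ℝ) 1, (t : AddCircle (1 : ℝ)) = y :=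
    ⟨_, by simpa using (AddCircle.equivIco 1 0 y).2, AddCircle.coe_equivIco⟩
  rcases eq_or_ne t 0 with rfl | ht0
  · simp [B1]
  · have h1t : 1 - t ∈ Set.Ico (0 : ℝ) 1 :=
      ⟨by linarith [ht.2], by linarith [lt_of_le_of_ne ht.1 ht0.symm]⟩
    rw [← AddCircle.coe_neg, show -t = (1 - t) - 1 by ring, AddCircle.coe_sub,
      AddCircle.coe_period, sub_zero, B1_coe_of_mem_Ico h1t, B1_coe_of_mem_Ico ht,
      if_neg (by linarith [ht.2]), if_neg ht0]
    ring

def integerLattice (n : ℕ) : AddSubgroup (Fin n → ℝ) where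
  carrier := {x | ∀ i, ∃ k : ℤ, x i = k}
  zero_mem' i := ⟨0, by simp⟩
  add_mem' {x y} hx hy i := by
    obtain ⟨k, hk⟩ := hx i
    obtain ⟨m, hm⟩ := hy i
    exact ⟨k + m, by simp [hk, hm]⟩
  neg_mem' {x} hx i := by
    obtain ⟨k, hk⟩ := hx i
    exact ⟨-k, by simp [hk]⟩

section

variable {n : ℕ} {Λ : AddSubgroup (Fin n → ℝ)}

@[simp]
lemma coordHom_apply (x : Λ) (i : Fin n) :
    coordHom n Λ i x = ((x : Fin n → ℝ) i : AddCircle (1 : ℝ)) :=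
  rfl

lemma coordHom_eq_zero_of_mem_integerLattice {x : Λ} (hx : (x : Fin n → ℝ) ∈ integerLattice n)
    (i : Fin n) : coordHom n Λ i x = 0 := by
  obtain ⟨k, hk⟩ := hx i
  rw [coordHom_apply, hk, AddCircle.coe_eq_zero_iff]
  exact ⟨k, by simp⟩

lemma finite_quotient_integerLattice (hZ : ∀ v : Fin n → ℤ, (fun i => (v i : ℝ)) ∈ Λ)
    (hfin : {x : Fin n → ℝ | x ∈ Λ ∧ ∀ i, x i ∈ Set.Ico (0 : ℝ) 1}.Finite) :
    Finite (Λ ⧸ (integerLattice n).addSubgroupOf Λ) := by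
  have := hfin.to_subtype
  refine .of_surjective (fun c : {x : Fin n → ℝ | x ∈ Λ ∧ ∀ i, x i ∈ Set.Ico (0 : ℝ) 1} =>
    ((⟨c.1, c.2.1⟩ : Λ) : Λ ⧸ (integerLattice n).addSubgroupOf Λ)) ?_
  rintro ⟨x⟩
  refine ⟨⟨fun i => Int.fract ((x : Fin n → ℝ) i), ?_,
    fun i => ⟨Int.fract_nonneg _, Int.fract_lt_one _⟩⟩, ?_⟩
  · convert Λ.sub_mem x.2 (hZ fun i => ⌊(x : Fin n → ℝ) i⌋) using 2
    exact (Int.self_sub_floor _).symm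
  · refine QuotientAddGroup.eq.2 fun i => ⟨⌊(x : Fin n → ℝ) i⌋, ?_⟩
    simp [← Int.self_sub_floor]

lemma finite_homs_vanishing_on_integerLattice (hZ : ∀ v : Fin n → ℤ, (fun i => (v i : ℝ)) ∈ Λ)
    (hfin : {x : Fin n → ℝ | x ∈ Λ ∧ ∀ i, x i ∈ Set.Ico (0 : ℝ) 1}.Finite) :
    Finite {φ : Λ →+ AddCircle (1 : ℝ) //
      ∀ x : Λ, (∀ i, ∃ k : ℤ, (x : Fin n → ℝ) i = (k : ℝ)) → φ x = 0} := by
  have := finite_quotient_integerLattice hZ hfin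
  refine .of_injective (fun φ => QuotientAddGroup.lift ((integerLattice n).addSubgroupOf Λ) φ.1
    fun x hx => φ.2 x hx) fun φ ψ h => ?_
  ext x
  exact DFunLike.congr_fun h (QuotientAddGroup.mk x)

end

open scoped Classical in
/-- Equation (5) (`eq:alternate_ulambda`).  For `u ∈ ℝⁿ` and `λ ∈ Λ ∩ [0,1)ⁿ`,
`Σᵢ uᵢ λᵢ = ½ (|H| ⟨h_u, S_λ⟩ + Σ_{i : λᵢ ≠ 0} uᵢ)`, where
`H = Hom(Λ/ℤⁿ, ℝ/ℤ)` (identified with the homomorphisms `Λ → ℝ/ℤ` vanishing on the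
integer vectors in `Λ`), `h_u(φ) = Σ_{i : π i = φ} uᵢ - Σ_{i : π i = -φ} uᵢ`,
`S_λ(φ) = B₁(φ(λ))`, and `⟨f, h⟩ = |H|⁻¹ Σ_{φ ∈ H} f(φ) conj (h(φ))`. -/
theorem sum_u_lambda_identity (n : ℕ) (Λ : AddSubgroup (Fin n → ℝ))
    (hZ : ∀ v : Fin n → ℤ, (fun i => (v i : ℝ)) ∈ Λ)
    (hfin : {x : Fin n → ℝ | x ∈ Λ ∧ ∀ i, x i ∈ Set.Ico (0 : ℝ) 1}.Finite)
    (u : Fin n → ℝ) (l : Fin n → ℝ) (hl : l ∈ Λ) (hl01 : ∀ i, l i ∈ Set.Ico (0 : ℝ) 1) :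
    ((∑ i, u i * l i : ℝ) : ℂ) =
      (1 / 2) *
        ((Nat.card {φ : ↥Λ →+ AddCircle (1 : ℝ) //
            ∀ x : ↥Λ, (∀ i, ∃ k : ℤ, (x : Fin n → ℝ) i = (k : ℝ)) → φ x = 0} : ℂ) *
          ((Nat.card {φ : ↥Λ →+ AddCircle (1 : ℝ) //
              ∀ x : ↥Λ, (∀ i, ∃ k : ℤ, (x : Fin n → ℝ) i = (k : ℝ)) → φ x = 0} : ℂ)⁻¹ *
            ∑ᶠ φ : {φ : ↥Λ →+ AddCircle (1 : ℝ) //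
                ∀ x : ↥Λ, (∀ i, ∃ k : ℤ, (x : Fin n → ℝ) i = (k : ℝ)) → φ x = 0},
              ((∑ i, if coordHom n Λ i = φ.1 then (u i : ℂ) else 0) -
                  (∑ i, if coordHom n Λ i = -φ.1 then (u i : ℂ) else 0)) *
                (starRingEnd ℂ) ((B1 (φ.1 ⟨l, hl⟩) : ℝ) : ℂ)) +
          ∑ i, if l i ≠ 0 then (u i : ℂ) else 0) := by
  have hH := finite_homs_vanishing_on_integerLattice hZ hfin
  have hcoord i : ∀ x : Λ, (∀ j, ∃ k : ℤ, (x : Fin n → ℝ) j = (k : ℝ)) → coordHom n Λ i x = 0 :=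
    fun _ hx => coordHom_eq_zero_of_mem_integerLattice hx i
  rw [← mul_assoc, mul_inv_cancel₀ (Nat.cast_ne_zero.2 (Nat.card_ne_zero.2
    ⟨⟨0, fun _ _ => rfl⟩, hH⟩)), one_mul]
  simp_rw [sub_mul]
  rw [finsum_sub_distrib (Set.toFinite _) (Set.toFinite _)]
  simp_rw [← neg_eq_iff_eq_neg]
  -- `hP := hH` pins down the predicate `P`, which cannot be inferred from `hcoord` by unification
  rw [finsum_sum_ite_eq_mul (hP := hH) _ hcoord, finsum_sum_ite_eq_mul (hP := hH) _
    fun i x hx => by rw [AddMonoidHom.neg_apply, hcoord i x hx, neg_zero]]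
  simp only [AddMonoidHom.neg_apply, coordHom_apply, B1_neg, Complex.conj_ofReal]
  rw [← sum_sub_distrib, ← sum_add_distrib, mul_sum]
  push_cast
  refine sum_congr rfl fun i _ => ?_
  rw [B1_coe_of_mem_Ico (hl01 i)]
  by_cases h : l i = 0 <;> simp [h]
  ring
end
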